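/- Let (Ω, 𝓕, P) be a probability space with a filtration (𝓕_j)_{j≥0}. Let (κ_j)_{j≥0} be positive-integer-valued random variables with κ_j measurable with respect to 𝓕_j, and set κ̄_J = Σ_{j=0}^{J−1} κ_j. Let (D_j)_{j≥1} be integrable real random variables with D_j measurable with respect to 𝓕_j, E[D_j | 𝓕_{j−1}] = 0 almost surely, and E[D_j² | 𝓕_{j−1}] ≤ B·κ_{j−1} almost surely for a constant B < ∞. Suppose there exist a real m > 1 and a random variable 𝓘 such that κ_j / m^j → 𝓘 almost surely as j → ∞. Then for every δ > 0, on the event {𝓘 > δ} it holds almost surely that (1/κ̄_J)·Σ_{j=1}^{J} D_j → 0 as J → ∞. -/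

import Mathlib

open MeasureTheory Filter Finset Topology

/-!
Truncate the increments: for a level `K`, keep `D_{j+1}` only on the `𝓕_j`-event that
`κ_i ≤ K m^i` for all `i ≤ j`. The truncated increments are still martingale differences, now
with `E[D_{j+1}^2 1_{…}] ≤ B K m^j`, so by orthogonality the truncated partial sums `S_J`
satisfy `E[S_J^2] ≤ B K m^J / (m - 1)`. Hence `Σ_J E[(S_J / m^J)^2] < ∞`, and `S_J / m^J → 0`
almost surely. Since `κ_j / m^j` converges, almost every `ω` lies in every truncation event for
some `K`, where `S_J` is the untruncated sum; on `{𝓘 > δ}` the normaliser `Σ_{j<J} κ_j` is at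
least of order `m^J`.
-/

lemma tendsto_zero_of_tendsto_sq_zero {x : ℕ → ℝ}
    (h : Tendsto (fun n => x n ^ 2) atTop (𝓝 0)) : Tendsto x atTop (𝓝 0) := by
  rw [tendsto_zero_iff_abs_tendsto_zero]
  simpa [Real.sqrt_sq_eq_abs, Function.comp_def] using h.sqrt

lemma sum_range_pow_le_div {m : ℝ} (hm : 1 < m) (J : ℕ) :
    ∑ j ∈ range J, m ^ j ≤ m ^ J / (m - 1) := by
  rw [geom_sum_eq hm.ne', div_le_div_iff_of_pos_right (by linarith)]
  linarith

lemma tendsto_div_sum_of_tendsto_div_pow {a κ : ℕ → ℝ} {m I : ℝ} (hm : 0 < m)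
    (hκ0 : ∀ j, 0 ≤ κ j) (hκ : Tendsto (fun j => κ j / m ^ j) atTop (𝓝 I)) (hI : 0 < I)
    (ha : Tendsto (fun J => a J / m ^ J) atTop (𝓝 0)) :
    Tendsto (fun J => a J / ∑ j ∈ range J, κ j) atTop (𝓝 0) := by
  obtain ⟨N, hN⟩ := eventually_atTop.1 (hκ.eventually (lt_mem_nhds (half_lt_self hI)))
  have hsum : ∀ J, N < J → I / 2 / m * m ^ J ≤ ∑ j ∈ range J, κ j := fun J hJ => by
    obtain ⟨k, rfl⟩ := Nat.exists_eq_add_of_lt hJ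
    calc I / 2 / m * m ^ (N + k + 1) = I / 2 * m ^ (N + k) := by
          rw [pow_succ]; field_simp
      _ ≤ κ (N + k) := by
          have := hN (N + k) (by omega)
          rw [lt_div_iff₀ (by positivity)] at this
          exact this.le
      _ ≤ ∑ j ∈ range (N + k + 1), κ j :=
          single_le_sum (fun j _ => hκ0 j) (mem_range.2 (by omega))
  have hbound : Tendsto (fun J => m / (I / 2) * (|a J| / m ^ J)) atTop (𝓝 0) := by
    simpa [abs_div, abs_of_pos hm] using ha.abs.const_mul (m / (I / 2))
  refine squeeze_zero_norm' ?_ hbound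
  filter_upwards [eventually_gt_atTop N] with J hJ
  have hpos : 0 < I / 2 / m * m ^ J := by positivity
  rw [Real.norm_eq_abs, abs_div, abs_of_nonneg (sum_nonneg fun j _ => hκ0 j)]
  calc |a J| / ∑ j ∈ range J, κ j ≤ |a J| / (I / 2 / m * m ^ J) :=
        div_le_div_of_nonneg_left (abs_nonneg _) hpos (hsum J hJ)
    _ = m / (I / 2) * (|a J| / m ^ J) := by field_simp

section

variable {Ω : Type*} {m0 : MeasurableSpace Ω} {P : Measure Ω}

lemma integral_mul_eq_zero_of_condExp_eq_zero [IsFiniteMeasure P] {m : MeasurableSpace Ω}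
    (hm : m ≤ m0) {X Y : Ω → ℝ} (hX : StronglyMeasurable[m] X) (hY : Integrable Y P)
    (hXY : Integrable (X * Y) P) (hY0 : P[Y|m] =ᵐ[P] 0) :
    ∫ ω, X ω * Y ω ∂P = 0 := by
  have hpull : P[X * Y|m] =ᵐ[P] 0 := by
    filter_upwards [condExp_mul_of_stronglyMeasurable_left hX hXY hY, hY0] with ω h h0
    simp [h, h0]
  calc ∫ ω, X ω * Y ω ∂P = ∫ ω, (P[X * Y|m]) ω ∂P := (integral_condExp hm).symm
    _ = 0 := by simp [integral_congr_ae hpull]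

lemma integral_sq_sum_range_eq_sum_integral_sq [IsFiniteMeasure P] (ℱ : Filtration ℕ m0)
    {Y : ℕ → Ω → ℝ} (hYmeas : ∀ j, StronglyMeasurable[ℱ (j + 1)] (Y j))
    (hY2 : ∀ j, MemLp (Y j) 2 P) (hY0 : ∀ j, P[Y j|ℱ j] =ᵐ[P] 0) (J : ℕ) :
    ∫ ω, (∑ j ∈ range J, Y j ω) ^ 2 ∂P = ∑ j ∈ range J, ∫ ω, Y j ω ^ 2 ∂P := by
  induction J with
  | zero => simp
  | succ J ih =>
    set S : Ω → ℝ := fun ω => ∑ j ∈ range J, Y j ω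
    have hS2 : MemLp S 2 P := memLp_finsetSum _ fun j _ => hY2 j
    have hSmeas : StronglyMeasurable[ℱ J] S :=
      stronglyMeasurable_fun_sum _ fun j hj => (hYmeas j).mono (ℱ.mono (mem_range.1 hj))
    have hcross : ∫ ω, S ω * Y J ω ∂P = 0 :=
      integral_mul_eq_zero_of_condExp_eq_zero (ℱ.le J) hSmeas
        ((hY2 J).integrable one_le_two) (hS2.integrable_mul (hY2 J)) (hY0 J)
    calc ∫ ω, (∑ j ∈ range (J + 1), Y j ω) ^ 2 ∂P
        = ∫ ω, (S ω ^ 2 + 2 * (S ω * Y J ω) + Y J ω ^ 2) ∂P := by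
          congr 1 with ω; simp only [S, sum_range_succ]; ring
      _ = ∫ ω, S ω ^ 2 ∂P + 2 * ∫ ω, S ω * Y J ω ∂P + ∫ ω, Y J ω ^ 2 ∂P := by
          rw [integral_add, integral_add, integral_const_mul]
          · exact hS2.integrable_sq
          · exact (hS2.integrable_mul (hY2 J)).const_mul 2
          · exact hS2.integrable_sq.add ((hS2.integrable_mul (hY2 J)).const_mul 2)
          · exact (hY2 J).integrable_sq
      _ = ∑ j ∈ range (J + 1), ∫ ω, Y j ω ^ 2 ∂P := by
          rw [hcross, sum_range_succ, ← ih]; ring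

lemma setIntegral_le_of_condExp_le [IsProbabilityMeasure P] {m : MeasurableSpace Ω}
    (hm : m ≤ m0) {f : Ω → ℝ} {A : Set Ω} {c : ℝ} (hc : 0 ≤ c) (hf : Integrable f P)
    (hA : MeasurableSet[m] A) (hbound : ∀ᵐ ω ∂P, ω ∈ A → P[f|m] ω ≤ c) :
    ∫ ω in A, f ω ∂P ≤ c := by
  rw [← setIntegral_condExp hm hf hA]
  calc ∫ ω in A, (P[f|m]) ω ∂P ≤ ∫ _ in A, c ∂P := by
        refine setIntegral_mono_ae_restrict integrable_condExp.integrableOn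
          (integrableOn_const (measure_ne_top _ _)) ?_
        exact (ae_restrict_iff' (hm A hA)).2 hbound
    _ = P.real A * c := by rw [setIntegral_const, smul_eq_mul]
    _ ≤ c := mul_le_of_le_one_left hc measureReal_le_one

lemma ae_summable_of_summable_integral {f : ℕ → Ω → ℝ} (hf0 : ∀ n, 0 ≤ᵐ[P] f n)
    (hf : ∀ n, Integrable (f n) P) (hsum : Summable fun n => ∫ ω, f n ω ∂P) :
    ∀ᵐ ω ∂P, Summable fun n => f n ω := by
  have hfin : ∫⁻ ω, ∑' n, ENNReal.ofReal (f n ω) ∂P ≠ ⊤ := by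
    rw [lintegral_tsum fun n => (hf n).aemeasurable.ennreal_ofReal]
    simp_rw [← ofReal_integral_eq_lintegral_ofReal (hf _) (hf0 _)]
    rw [← ENNReal.ofReal_tsum_of_nonneg (fun n => integral_nonneg_of_ae (hf0 n)) hsum]
    exact ENNReal.ofReal_ne_top
  filter_upwards [ae_lt_top' (AEMeasurable.tsum fun n =>
    (hf n).aemeasurable.ennreal_ofReal) hfin, ae_all_iff.2 hf0] with ω hω hω0
  simpa [ENNReal.toReal_ofReal (hω0 _)] using ENNReal.summable_toReal hω.ne

lemma ae_tendsto_div_pow_zero_of_integral_sq_le {X : ℕ → Ω → ℝ} {C r : ℝ} (hr : 1 < r)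
    (hX : ∀ n, MemLp (X n) 2 P) (hC : ∀ n, ∫ ω, X n ω ^ 2 ∂P ≤ C * r ^ n) :
    ∀ᵐ ω ∂P, Tendsto (fun n => X n ω / r ^ n) atTop (𝓝 0) := by
  have hr0 : 0 < r := zero_lt_one.trans hr
  have hint : ∀ n, Integrable (fun ω => (X n ω / r ^ n) ^ 2) P := fun n =>
    ((hX n).integrable_sq.div_const ((r ^ n) ^ 2)).congr
      (ae_of_all _ fun ω => (div_pow _ _ _).symm)
  have hmoment : ∀ n, ∫ ω, (X n ω / r ^ n) ^ 2 ∂P ≤ C * (r⁻¹) ^ n := fun n =>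
    calc ∫ ω, (X n ω / r ^ n) ^ 2 ∂P = (∫ ω, X n ω ^ 2 ∂P) / (r ^ n) ^ 2 := by
          simp_rw [div_pow]; exact integral_div _ _
      _ ≤ C * r ^ n / (r ^ n) ^ 2 := by gcongr; exact hC n
      _ = C * (r⁻¹) ^ n := by rw [inv_pow]; field_simp
  have hsum : Summable fun n => ∫ ω, (X n ω / r ^ n) ^ 2 ∂P :=
    Summable.of_nonneg_of_le (fun n => integral_nonneg fun ω => sq_nonneg _) hmoment
      ((summable_geometric_of_lt_one (by positivity) (inv_lt_one_of_one_lt₀ hr)).mul_left C)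
  filter_upwards [ae_summable_of_summable_integral (fun n => ae_of_all _ fun ω => sq_nonneg _)
    hint hsum] with ω hω
  exact tendsto_zero_of_tendsto_sq_zero hω.tendsto_atTop_zero

def boundedGrowthSet (κ : ℕ → Ω → ℝ) (m K : ℝ) (j : ℕ) : Set Ω :=
  {ω | ∀ i ≤ j, κ i ω ≤ K * m ^ i}

lemma measurableSet_boundedGrowthSet (ℱ : Filtration ℕ m0) {κ : ℕ → Ω → ℝ}
    (hκ : ∀ j, Measurable[ℱ j] (κ j)) (m K : ℝ) (j : ℕ) :
    MeasurableSet[ℱ j] (boundedGrowthSet κ m K j) := by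
  simp only [boundedGrowthSet, Set.ofPred_forall]
  exact .iInter fun i => .iInter fun hi =>
    measurableSet_le ((hκ i).mono (ℱ.mono hi) le_rfl) measurable_const

lemma exists_nat_forall_mem_boundedGrowthSet {κ : ℕ → Ω → ℝ} {m : ℝ} (hm : 0 < m)
    {ω : Ω} (h : BddAbove (Set.range fun j => κ j ω / m ^ j)) :
    ∃ K : ℕ, ∀ j, ω ∈ boundedGrowthSet κ m K j := by
  obtain ⟨C, hC⟩ := h
  obtain ⟨K, hK⟩ := exists_nat_ge C
  refine ⟨K, fun j i _ => ?_⟩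
  rw [← div_le_iff₀ (by positivity)]
  exact (hC (Set.mem_range_self i)).trans hK

lemma integral_sq_indicator_boundedGrowthSet_le [IsProbabilityMeasure P]
    (ℱ : Filtration ℕ m0) {κ : ℕ → Ω → ℝ} (hκ : ∀ j, Measurable[ℱ j] (κ j)) {D : Ω → ℝ}
    {j : ℕ} (hD2 : Integrable (fun ω => D ω ^ 2) P) {B : ℝ} (hB : 0 ≤ B)
    (hvar : ∀ᵐ ω ∂P, P[fun ω => D ω ^ 2|ℱ j] ω ≤ B * κ j ω) {m K : ℝ}
    (hm : 0 ≤ m) (hK : 0 ≤ K) :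
    ∫ ω, (boundedGrowthSet κ m K j).indicator D ω ^ 2 ∂P ≤ B * K * m ^ j := by
  set A := boundedGrowthSet κ m K j
  have hA : MeasurableSet[ℱ j] A := measurableSet_boundedGrowthSet ℱ hκ m K j
  calc ∫ ω, A.indicator D ω ^ 2 ∂P = ∫ ω in A, D ω ^ 2 ∂P := by
        rw [← integral_indicator (ℱ.le j _ hA)]
        congr 1 with ω
        by_cases hω : ω ∈ A <;> simp [hω]
    _ ≤ B * K * m ^ j := by
        refine setIntegral_le_of_condExp_le (ℱ.le j) (by positivity) hD2 hA ?_
        filter_upwards [hvar] with ω h hω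
        rw [mul_assoc]
        exact h.trans (mul_le_mul_of_nonneg_left (hω j le_rfl) hB)

lemma ae_tendsto_sum_indicator_boundedGrowthSet_div_pow [IsProbabilityMeasure P]
    (ℱ : Filtration ℕ m0) {κ : ℕ → Ω → ℝ} (hκ : ∀ j, Measurable[ℱ j] (κ j))
    {D : ℕ → Ω → ℝ} (hDmeas : ∀ j, StronglyMeasurable[ℱ (j + 1)] (D j))
    (hD2 : ∀ j, MemLp (D j) 2 P) (hD0 : ∀ j, P[D j|ℱ j] =ᵐ[P] 0) {B : ℝ} (hB : 0 ≤ B)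
    (hvar : ∀ j, ∀ᵐ ω ∂P, P[fun ω => D j ω ^ 2|ℱ j] ω ≤ B * κ j ω) {m K : ℝ}
    (hm : 1 < m) (hK : 0 ≤ K) :
    ∀ᵐ ω ∂P, Tendsto (fun J =>
      (∑ j ∈ range J, (boundedGrowthSet κ m K j).indicator (D j) ω) / m ^ J)
      atTop (𝓝 0) := by
  set A := boundedGrowthSet κ m K
  set Y : ℕ → Ω → ℝ := fun j => (A j).indicator (D j)
  have hA : ∀ j, MeasurableSet[ℱ j] (A j) := measurableSet_boundedGrowthSet ℱ hκ m K
  have hY2 : ∀ j, MemLp (Y j) 2 P := fun j => (hD2 j).indicator (ℱ.le j _ (hA j))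
  have hY0 : ∀ j, P[Y j|ℱ j] =ᵐ[P] 0 := fun j => by
    filter_upwards [condExp_indicator ((hD2 j).integrable one_le_two) (hA j), hD0 j] with ω h h0
    simp [Y, h, h0]
  have hdiag : ∀ j, ∫ ω, Y j ω ^ 2 ∂P ≤ B * K * m ^ j := fun j =>
    integral_sq_indicator_boundedGrowthSet_le ℱ hκ (hD2 j).integrable_sq hB (hvar j)
      (zero_le_one.trans hm.le) hK
  refine ae_tendsto_div_pow_zero_of_integral_sq_le (C := B * K / (m - 1)) hm
    (fun J => memLp_finsetSum _ fun j _ => hY2 j) fun J => ?_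
  rw [integral_sq_sum_range_eq_sum_integral_sq ℱ
    (fun j => (hDmeas j).indicator (ℱ.mono j.le_succ _ (hA j))) hY2 hY0]
  calc ∑ j ∈ range J, ∫ ω, Y j ω ^ 2 ∂P ≤ ∑ j ∈ range J, B * K * m ^ j :=
        sum_le_sum fun j _ => hdiag j
    _ = B * K * ∑ j ∈ range J, m ^ j := by rw [mul_sum]
    _ ≤ B * K * (m ^ J / (m - 1)) := by gcongr; exact sum_range_pow_le_div hm J
    _ = B * K / (m - 1) * m ^ J := by ring

end

theorem stmt_9_general {Ω : Type*} {m0 : MeasurableSpace Ω} (P : Measure Ω) [IsProbabilityMeasure P]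
    (𝓕 : ℕ → MeasurableSpace Ω) (hle : ∀ j, 𝓕 j ≤ m0) (hmono : Monotone 𝓕)
    (κ : ℕ → Ω → ℕ)
    (hκmeas : ∀ j, Measurable[𝓕 j] (κ j))
    (D : ℕ → Ω → ℝ)
    (hDmeas : ∀ j, 1 ≤ j → Measurable[𝓕 j] (D j))
    (hDsqint : ∀ j, 1 ≤ j → Integrable (fun ω => (D j ω) ^ 2) P)
    (hcond0 : ∀ j, 1 ≤ j → P[D j | 𝓕 (j - 1)] =ᵐ[P] 0)
    (B : ℝ)
    (hcondvar : ∀ j, 1 ≤ j →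
      ∀ᵐ ω ∂P, (P[fun ω' => (D j ω') ^ 2 | 𝓕 (j - 1)]) ω ≤ B * (κ (j - 1) ω : ℝ))
    (m : ℝ) (hm : 1 < m)
    (I : Ω → ℝ)
    (hconv : ∀ᵐ ω ∂P, Tendsto (fun j => (κ j ω : ℝ) / m ^ j) atTop (nhds (I ω)))
    (δ : ℝ) (hδ : 0 < δ) :
    ∀ᵐ ω ∂P, δ < I ω →
      Tendsto (fun J => (∑ j ∈ Finset.Icc 1 J, D j ω) / ∑ j ∈ Finset.range J, (κ j ω : ℝ))
        atTop (nhds 0) := by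
  let ℱ : Filtration ℕ m0 := ⟨𝓕, hmono, hle⟩
  have hDmeas_succ : ∀ j, StronglyMeasurable[ℱ (j + 1)] (D (j + 1)) := fun j =>
    (hDmeas (j + 1) j.succ_pos).stronglyMeasurable
  have hD2 : ∀ j, MemLp (D (j + 1)) 2 P := fun j =>
    (memLp_two_iff_integrable_sq ((hDmeas_succ j).mono (ℱ.le _)).aestronglyMeasurable).2
      (hDsqint (j + 1) j.succ_pos)
  have htrunc : ∀ K : ℕ, ∀ᵐ ω ∂P, Tendsto (fun J => (∑ j ∈ range J,
      (boundedGrowthSet (fun j ω => (κ j ω : ℝ)) m K j).indicator (D (j + 1)) ω) / m ^ J)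
      atTop (𝓝 0) := fun K =>
    ae_tendsto_sum_indicator_boundedGrowthSet_div_pow ℱ
      (fun j => measurable_from_top.comp (hκmeas j)) hDmeas_succ hD2
      (fun j => hcond0 (j + 1) j.succ_pos) (le_max_right B 0)
      (fun j => (hcondvar (j + 1) j.succ_pos).mono fun ω h => h.trans
        (mul_le_mul_of_nonneg_right (le_max_left B 0) (Nat.cast_nonneg _))) hm K.cast_nonneg
  filter_upwards [hconv, ae_all_iff.2 htrunc] with ω hconvω htruncω hδI
  obtain ⟨K, hK⟩ :=
    exists_nat_forall_mem_boundedGrowthSet (κ := fun j ω => (κ j ω : ℝ))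
      (zero_lt_one.trans hm) hconvω.bddAbove_range
  refine tendsto_div_sum_of_tendsto_div_pow (zero_lt_one.trans hm) (fun j => Nat.cast_nonneg _)
    hconvω (hδ.trans hδI) ?_
  convert htruncω K using 3 with J
  rw [sum_congr rfl fun j _ => Set.indicator_of_mem (hK j) _, range_eq_Ico,
    sum_Ico_add' (fun j => D j ω)]
  rfl

/-- Epoch-level martingale strong law of large numbers for supercritical branching-type data:
if `(D j)` is a martingale difference sequence with conditional variances bounded by
`B * κ (j-1)`, and the epoch sizes `κ j` grow like `m^j · 𝓘` with `m > 1`, then on the event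
`{𝓘 > δ}` the normalized sums `(∑_{j=1}^J D j) / (∑_{j=0}^{J-1} κ j)` tend to `0` a.s. -/
theorem stmt_9 {Ω : Type*} {m0 : MeasurableSpace Ω} (P : Measure Ω) [IsProbabilityMeasure P]
    (𝓕 : ℕ → MeasurableSpace Ω) (hle : ∀ j, 𝓕 j ≤ m0) (hmono : Monotone 𝓕)
    (κ : ℕ → Ω → ℕ) (hκpos : ∀ j ω, 0 < κ j ω)
    (hκmeas : ∀ j, Measurable[𝓕 j] (κ j))
    (D : ℕ → Ω → ℝ)
    (hDmeas : ∀ j, 1 ≤ j → Measurable[𝓕 j] (D j))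
    (hDint : ∀ j, 1 ≤ j → Integrable (D j) P)
    (hDsqint : ∀ j, 1 ≤ j → Integrable (fun ω => (D j ω) ^ 2) P)
    (hcond0 : ∀ j, 1 ≤ j → P[D j | 𝓕 (j - 1)] =ᵐ[P] 0)
    (B : ℝ)
    (hcondvar : ∀ j, 1 ≤ j →
      ∀ᵐ ω ∂P, (P[fun ω' => (D j ω') ^ 2 | 𝓕 (j - 1)]) ω ≤ B * (κ (j - 1) ω : ℝ))
    (m : ℝ) (hm : 1 < m)
    (I : Ω → ℝ)
    (hconv : ∀ᵐ ω ∂P, Tendsto (fun j => (κ j ω : ℝ) / m ^ j) atTop (nhds (I ω)))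
    (δ : ℝ) (hδ : 0 < δ) :
    ∀ᵐ ω ∂P, δ < I ω →
      Tendsto (fun J => (∑ j ∈ Finset.Icc 1 J, D j ω) / ∑ j ∈ Finset.range J, (κ j ω : ℝ))
        atTop (nhds 0) :=
  stmt_9_general P 𝓕 hle hmono κ hκmeas D hDmeas hDsqint hcond0 B hcondvar m hm I hconv δ hδ
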